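/- Let p(x) = ∏_{i=1}^k (x - x_i) where 0 ≤ x_i ≤ a for every i. Then ∫_0^a |p(x)| dx ≤ a^{k+1}/(k+1), and this maximum value a^{k+1}/(k+1) is attained when all x_i = 0 (i.e., for p(x) = x^k). -/

import Mathlib

/-!
Pointwise AM-GM gives `|p(t)| ≤ (1/k) ∑ᵢ |t - xᵢ|^k`. Each term integrates to
`∫₀ᵃ |t - c|^k = (c^(k+1) + (a-c)^(k+1))/(k+1)`, which is at most `a^(k+1)/(k+1)` because
`u ↦ u^(k+1)` is superadditive on `[0, ∞)`; averaging over `i` gives the bound.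
-/

open intervalIntegral Finset

theorem Real.prod_le_sum_pow_card_div_card {ι : Type*} {s : Finset ι} (hs : s.Nonempty)
    {y : ι → ℝ} (hy : ∀ i ∈ s, 0 ≤ y i) :
    ∏ i ∈ s, y i ≤ (∑ i ∈ s, y i ^ #s) / #s := by
  have hcard : (#s : ℝ) ≠ 0 := by exact_mod_cast hs.card_pos.ne'
  have amgm := Real.geom_mean_le_arith_mean_weighted s (fun _ ↦ (#s : ℝ)⁻¹) (fun i ↦ y i ^ #s)
    (fun _ _ ↦ by positivity) (by simp [hcard]) (fun i hi ↦ pow_nonneg (hy i hi) _)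
  rw [sum_div]
  convert amgm using 2 with i hi i
  · exact (Real.pow_rpow_inv_natCast (hy i hi) hs.card_pos.ne').symm
  · exact div_eq_inv_mul _ _

theorem integral_abs_sub_pow {a b c : ℝ} (hac : a ≤ c) (hcb : c ≤ b) (n : ℕ) :
    ∫ t in a..b, |t - c| ^ n = ((c - a) ^ (n + 1) + (b - c) ^ (n + 1)) / (n + 1) := by
  have hint : ∀ u v : ℝ, IntervalIntegrable (fun t ↦ |t - c| ^ n) MeasureTheory.volume u v :=
    fun u v ↦ ((continuous_id.sub continuous_const).abs.pow n).intervalIntegrable u v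
  have left : ∫ t in a..c, |t - c| ^ n = ∫ t in a..c, (c - t) ^ n :=
    integral_congr fun t ht ↦ by
      rw [Set.uIcc_of_le hac] at ht
      rw [abs_sub_comm, abs_of_nonneg (sub_nonneg.2 ht.2)]
  have right : ∫ t in c..b, |t - c| ^ n = ∫ t in c..b, (t - c) ^ n :=
    integral_congr fun t ht ↦ by
      rw [Set.uIcc_of_le hcb] at ht
      rw [abs_of_nonneg (sub_nonneg.2 ht.1)]
  rw [← integral_add_adjacent_intervals (hint a c) (hint c b), left, right,
    integral_comp_sub_left (fun t ↦ t ^ n), integral_comp_sub_right (fun t ↦ t ^ n),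
    integral_pow, integral_pow]
  simp only [sub_self]
  ring

theorem integral_abs_sub_pow_le {a c : ℝ} (hc : c ∈ Set.Icc 0 a) (n : ℕ) :
    ∫ t in (0)..a, |t - c| ^ n ≤ a ^ (n + 1) / (n + 1) := by
  rw [integral_abs_sub_pow hc.1 hc.2, sub_zero]
  gcongr
  calc c ^ (n + 1) + (a - c) ^ (n + 1) ≤ (c + (a - c)) ^ (n + 1) :=
        pow_add_pow_le hc.1 (sub_nonneg.2 hc.2) n.succ_ne_zero
    _ = a ^ (n + 1) := by rw [add_sub_cancel]

theorem integral_abs_prod_sub_le {ι : Type*} [Fintype ι] [Nonempty ι] {a : ℝ}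
    {x : ι → ℝ} (hx : ∀ i, x i ∈ Set.Icc 0 a) :
    ∫ t in (0)..a, |∏ i, (t - x i)| ≤ a ^ (Fintype.card ι + 1) / (Fintype.card ι + 1) := by
  set n := Fintype.card ι
  have ha : 0 ≤ a := (hx (Classical.arbitrary ι)).1.trans (hx _).2
  have hcont : ∀ i, Continuous fun t : ℝ ↦ |t - x i| ^ n :=
    fun i ↦ (continuous_id.sub continuous_const).abs.pow n
  calc ∫ t in (0)..a, |∏ i, (t - x i)|
      ≤ ∫ t in (0)..a, (∑ i, |t - x i| ^ n) / n := by
        refine integral_mono_on ha ((by fun_prop : Continuous _).intervalIntegrable _ _)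
          ((by fun_prop : Continuous _).intervalIntegrable _ _) fun t _ ↦ ?_
        rw [abs_prod]
        exact Real.prod_le_sum_pow_card_div_card univ_nonempty fun i _ ↦ abs_nonneg _
    _ = (∑ i, ∫ t in (0)..a, |t - x i| ^ n) / n := by
        rw [integral_div, integral_finsetSum fun i _ ↦ (hcont i).intervalIntegrable _ _]
    _ ≤ (∑ _i : ι, a ^ (n + 1) / (n + 1)) / n := by
        gcongr with i
        exact integral_abs_sub_pow_le (hx i) n
    _ = a ^ (n + 1) / (n + 1) := by
        rw [sum_const, card_univ, nsmul_eq_mul, mul_div_cancel_left₀ _ (by positivity)]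

/-- For `p(x) = ∏ i, (x - x i)` with all `x i ∈ [0,a]`, one has
`∫_0^a |p(x)| dx ≤ a^(k+1)/(k+1)`, and the maximum value `a^(k+1)/(k+1)` is attained
when all `x i = 0`, i.e. for `p(x) = x^k`. -/
theorem integral_abs_prod_le (a : ℝ) (ha : 0 < a) (k : ℕ) (hk : 1 ≤ k)
    (x : Fin k → ℝ) (hx : ∀ i, x i ∈ Set.Icc (0 : ℝ) a) :
    (∫ t in (0:ℝ)..a, |∏ i, (t - x i)|) ≤ a ^ (k + 1) / (k + 1) ∧
      ((∀ i, x i = 0) →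
        (∫ t in (0:ℝ)..a, |∏ i, (t - x i)|) = a ^ (k + 1) / (k + 1)) := by
  have : Nonempty (Fin k) := Fin.pos_iff_nonempty.1 hk
  refine ⟨by simpa using integral_abs_prod_sub_le hx, fun hx0 ↦ ?_⟩
  have hprod : ∀ t, |∏ i, (t - x i)| = |t - 0| ^ k := fun t ↦ by
    simp [hx0, abs_pow]
  simp_rw [hprod, integral_abs_sub_pow le_rfl ha.le]
  simp
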